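/- For β ∈ [0,1), the function δ_β defined by δ_β(x) = β·x for 0 ≤ x < e^(β−1) and δ_β(x) = x + x·ln(x) for e^(β−1) ≤ x ≤ 1 is a diagonal section of a semilinear quasi-copula, and the set {x ∈ (0,1] : (δ_β(x)/x)' = 0} ∪ {x ∈ (0,1] : (δ_β(x)/x)' = 1/x} has Lebesgue measure 1. Moreover, δ_β(u) < u² for every u ∈ (β, e^(β−1)), so the associated semilinear quasi-copula is not a copula. -/

import Mathlib

open MeasureTheory

def IsQuasiCopulaDiagonal (d : ℝ → ℝ) : Prop :=
  MonotoneOn d (Set.Icc 0 1) ∧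
  (∀ s ∈ Set.Icc (0:ℝ) 1, ∀ t ∈ Set.Icc (0:ℝ) 1, |d s - d t| ≤ 2 * |s - t|) ∧
  (∀ x ∈ Set.Icc (0:ℝ) 1, 0 ≤ d x ∧ d x ≤ x) ∧ d 1 = 1 ∧
  MonotoneOn (fun x => d x / x) (Set.Ioc (0:ℝ) 1) ∧
  (∀ x₁ x₂ : ℝ, 0 < x₁ → x₁ < x₂ → x₂ ≤ 1 →
    x₁ * ((d x₂ / x₂ - d x₁ / x₁) / (x₂ - x₁)) ≤ 1)

/-- The diagonal `δ_β`. -/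
noncomputable def deltaBeta (β : ℝ) (x : ℝ) : ℝ :=
  if x < Real.exp (β - 1) then β * x else x + x * Real.log x

lemma max_sub_max_le {b a₁ a₂ : ℝ} (h : a₁ ≤ a₂) : max b a₂ - max b a₁ ≤ a₂ - a₁ := by
  simp only [max_def]; split_ifs <;> linarith

lemma deltaBeta_div {β x : ℝ} (hx : 0 < x) :
    deltaBeta β x / x = max β (1 + Real.log x) := by
  unfold deltaBeta
  split_ifs with h
  · rw [mul_div_assoc, div_self hx.ne', mul_one, eq_comm, max_eq_left]
    have : Real.log x < β - 1 := (Real.log_lt_iff_lt_exp hx).2 h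
    linarith
  · push_neg at h
    have : β - 1 ≤ Real.log x := (Real.le_log_iff_exp_le hx).2 h
    rw [eq_comm, max_eq_right (by linarith)]
    field_simp

lemma deltaBeta_eq {β x : ℝ} (hx : 0 < x) :
    deltaBeta β x = x * max β (1 + Real.log x) := by
  have := deltaBeta_div (β := β) hx
  field_simp at this
  linarith [this]

lemma log_sub_log_le {s t : ℝ} (hs : 0 < s) (hst : s ≤ t) :
    Real.log t - Real.log s ≤ (t - s) / s := by
  have ht : 0 < t := lt_of_lt_of_le hs hst
  have h1 : Real.log (t / s) ≤ t / s - 1 :=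
    Real.log_le_sub_one_of_pos (div_pos ht hs)
  rw [Real.log_div ht.ne' hs.ne'] at h1
  have : t / s - 1 = (t - s) / s := by field_simp
  linarith [this ▸ h1]

theorem deltaBeta_extreme_quasi_not_copula (β : ℝ) (hβ : β ∈ Set.Ico (0:ℝ) 1) :
    IsQuasiCopulaDiagonal (deltaBeta β) ∧
    volume {x : ℝ | x ∈ Set.Ioc (0:ℝ) 1 ∧
      ∃ y : ℝ, HasDerivAt (fun t => deltaBeta β t / t) y x ∧ (y = 0 ∨ y = 1 / x)} = 1 ∧
    ∀ u ∈ Set.Ioo β (Real.exp (β - 1)), deltaBeta β u < u ^ 2 := by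
  obtain ⟨hβ0, hβ1⟩ := hβ
  set c : ℝ := Real.exp (β - 1) with hc
  have hc0 : 0 < c := Real.exp_pos _
  have hc1 : c < 1 := Real.exp_lt_one_iff.2 (by linarith)
  -- g x = max β (1 + log x)
  have hg_mono : ∀ s t : ℝ, 0 < s → s ≤ t →
      max β (1 + Real.log s) ≤ max β (1 + Real.log t) :=
    fun s t hs hst => max_le_max le_rfl (by linarith [Real.log_le_log hs hst])
  have hg_nonneg : ∀ x : ℝ, 0 ≤ max β (1 + Real.log x) :=
    fun x => le_trans hβ0 (le_max_left _ _)
  have hg_le_one : ∀ x : ℝ, 0 < x → x ≤ 1 → max β (1 + Real.log x) ≤ 1 := by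
    intro x hx hx1
    apply max_le hβ1.le
    have := Real.log_nonpos hx.le hx1
    linarith
  have hδ0 : deltaBeta β 0 = 0 := by
    unfold deltaBeta; rw [if_pos hc0]; ring
  have hδ_nonneg : ∀ x : ℝ, 0 ≤ x → 0 ≤ deltaBeta β x := by
    intro x hx
    rcases hx.eq_or_lt with h | h
    · rw [← h, hδ0]
    · rw [deltaBeta_eq h]; exact mul_nonneg h.le (hg_nonneg x)
  have hmono : MonotoneOn (deltaBeta β) (Set.Icc 0 1) := by
    intro s hs t ht hst
    rcases hs.1.eq_or_lt with h | h
    · rw [← h, hδ0]; exact hδ_nonneg t ht.1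
    · rw [deltaBeta_eq h, deltaBeta_eq (lt_of_lt_of_le h hst)]
      exact mul_le_mul hst (hg_mono s t h hst) (hg_nonneg s) (by linarith [ht.1])
  -- key Lipschitz bound
  have hlip_ord : ∀ s t : ℝ, 0 ≤ s → s ≤ t → t ≤ 1 →
      deltaBeta β t - deltaBeta β s ≤ 2 * (t - s) := by
    intro s t hs hst ht1
    rcases hs.eq_or_lt with h | h
    · rw [← h, hδ0, sub_zero]
      have h0t : (0:ℝ) ≤ t := h.le.trans hst
      rcases h0t.eq_or_lt with h2 | h2
      · rw [← h2, hδ0]; linarith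
      · rw [deltaBeta_eq h2]
        have := hg_le_one t h2 ht1
        nlinarith [hg_nonneg t]
    · have ht : 0 < t := lt_of_lt_of_le h hst
      rw [deltaBeta_eq h, deltaBeta_eq ht]
      have h2 : max β (1 + Real.log t) ≤ 1 := hg_le_one t ht ht1
      have h3 : max β (1 + Real.log t) - max β (1 + Real.log s)
          ≤ Real.log t - Real.log s := by
        linarith [max_sub_max_le (b := β)
          (show 1 + Real.log s ≤ 1 + Real.log t by
            linarith [Real.log_le_log h hst])]
      have h4 : Real.log t - Real.log s ≤ (t - s) / s := log_sub_log_le h hst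
      have hB : s * (max β (1 + Real.log t) - max β (1 + Real.log s))
          ≤ s * ((t - s) / s) := mul_le_mul_of_nonneg_left (h3.trans h4) h.le
      have hC : s * ((t - s) / s) = t - s := by field_simp
      have hA : (t - s) * (max β (1 + Real.log t)) ≤ (t - s) * 1 :=
        mul_le_mul_of_nonneg_left h2 (by linarith)
      have hEq : t * max β (1 + Real.log t) - s * max β (1 + Real.log s)
          = (t - s) * (max β (1 + Real.log t))
            + s * (max β (1 + Real.log t) - max β (1 + Real.log s)) := by ring
      linarith
  refine ⟨⟨hmono, ?_, ?_, ?_, ?_, ?_⟩, ?_, ?_⟩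
  · -- 2-Lipschitz
    intro s hs t ht
    rcases le_total s t with h | h
    · have h1 := hlip_ord s t hs.1 h ht.2
      have h2 : deltaBeta β s ≤ deltaBeta β t := hmono hs ht h
      rw [abs_sub_comm, abs_sub_comm s t, abs_of_nonneg (by linarith),
        abs_of_nonneg (by linarith)]
      linarith
    · have h1 := hlip_ord t s ht.1 h hs.2
      have h2 : deltaBeta β t ≤ deltaBeta β s := hmono ht hs h
      rw [abs_of_nonneg (by linarith), abs_of_nonneg (by linarith)]
      linarith
  · -- bounds
    intro x hx
    refine ⟨hδ_nonneg x hx.1, ?_⟩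
    rcases hx.1.eq_or_lt with h | h
    · rw [← h, hδ0]
    · rw [deltaBeta_eq h]
      nlinarith [hg_le_one x h hx.2]
  · -- d 1 = 1
    unfold deltaBeta
    rw [if_neg (by linarith), Real.log_one]; ring
  · -- monotone of quotient
    intro s hs t ht hst
    simp only
    rw [deltaBeta_div hs.1, deltaBeta_div (hs.1.trans_le hst)]
    exact hg_mono s t hs.1 hst
  · -- slope bound
    intro x₁ x₂ h1 h12 h21
    rw [deltaBeta_div h1, deltaBeta_div (h1.trans h12)]
    have hD : (0:ℝ) < x₂ - x₁ := by linarith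
    have h3 : max β (1 + Real.log x₂) - max β (1 + Real.log x₁)
        ≤ (x₂ - x₁) / x₁ := by
      have := max_sub_max_le (b := β)
        (show 1 + Real.log x₁ ≤ 1 + Real.log x₂ by
          linarith [Real.log_le_log h1 h12.le])
      linarith [log_sub_log_le h1 h12.le]
    have h4 : (max β (1 + Real.log x₂) - max β (1 + Real.log x₁)) / (x₂ - x₁)
        ≤ 1 / x₁ := by
      rw [div_le_div_iff₀ hD h1]
      have := mul_le_mul_of_nonneg_right h3 hD.le
      calc (max β (1 + Real.log x₂) - max β (1 + Real.log x₁)) * x₁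
          ≤ ((x₂ - x₁) / x₁) * x₁ := mul_le_mul_of_nonneg_right h3 h1.le
        _ = x₂ - x₁ := by field_simp
        _ = 1 * (x₂ - x₁) := by ring
    calc x₁ * ((max β (1 + Real.log x₂) - max β (1 + Real.log x₁)) / (x₂ - x₁))
        ≤ x₁ * (1 / x₁) := mul_le_mul_of_nonneg_left h4 h1.le
      _ = 1 := by field_simp
  · -- measure statement
    have hsub1 : {x : ℝ | x ∈ Set.Ioc (0:ℝ) 1 ∧
        ∃ y : ℝ, HasDerivAt (fun t => deltaBeta β t / t) y x ∧ (y = 0 ∨ y = 1 / x)}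
        ⊆ Set.Ioc (0:ℝ) 1 := fun x hx => hx.1
    have hsub2 : Set.Ioc (0:ℝ) 1 \ {c} ⊆ {x : ℝ | x ∈ Set.Ioc (0:ℝ) 1 ∧
        ∃ y : ℝ, HasDerivAt (fun t => deltaBeta β t / t) y x ∧ (y = 0 ∨ y = 1 / x)} := by
      rintro x ⟨hx, hxc⟩
      simp only [Set.mem_singleton_iff] at hxc
      refine ⟨hx, ?_⟩
      rcases lt_or_gt_of_ne hxc with h | h
      · -- x < c : locally constant β
        refine ⟨0, ?_, Or.inl rfl⟩
        have hev : (fun t : ℝ => deltaBeta β t / t) =ᶠ[nhds x] fun _ => β := by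
          have hmem : Set.Ioo (0:ℝ) c ∈ nhds x := isOpen_Ioo.mem_nhds ⟨hx.1, h⟩
          filter_upwards [hmem] with t ht
          rw [deltaBeta_div ht.1, max_eq_left]
          have : Real.log t < β - 1 := (Real.log_lt_iff_lt_exp ht.1).2 ht.2
          linarith
        exact (hasDerivAt_const x β).congr_of_eventuallyEq hev
      · -- x > c : locally 1 + log t
        refine ⟨1 / x, ?_, Or.inr rfl⟩
        have hx0 : (0:ℝ) < x := hx.1
        have hder : HasDerivAt (fun t : ℝ => 1 + Real.log t) (1 / x) x := by
          simpa [one_div] using (Real.hasDerivAt_log hx0.ne').const_add 1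
        refine hder.congr_of_eventuallyEq ?_
        have hmem : Set.Ioi c ∈ nhds x := isOpen_Ioi.mem_nhds h
        filter_upwards [hmem] with t ht
        have ht0 : 0 < t := hc0.trans ht
        rw [deltaBeta_div ht0, max_eq_right]
        have : β - 1 ≤ Real.log t := (Real.le_log_iff_exp_le ht0).2 (le_of_lt ht)
        linarith
    have h1 : volume (Set.Ioc (0:ℝ) 1 \ {c}) = 1 := by
      rw [measure_diff_null (measure_singleton c)]
      simp
    have h2 : volume (Set.Ioc (0:ℝ) 1) = 1 := by simp
    refine le_antisymm ?_ ?_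
    · calc volume _ ≤ volume (Set.Ioc (0:ℝ) 1) := measure_mono hsub1
        _ = 1 := h2
    · calc (1 : ENNReal) = volume (Set.Ioc (0:ℝ) 1 \ {c}) := h1.symm
        _ ≤ _ := measure_mono hsub2
  · -- not a copula
    intro u hu
    have hu0 : 0 < u := lt_of_le_of_lt hβ0 hu.1
    unfold deltaBeta
    rw [if_pos hu.2]
    nlinarith [hu.1]
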